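/- For every real number B > 1, the Hausdorff dimension of F(B) = {x ∈ I_even : a_{2n}(x) ≥ B^{2n} for infinitely many n} is at most s_B. -/

import Mathlib

open Filter Topology MeasureTheory

/-- The Gauss map `T(x) = 1/x mod 1`. -/
noncomputable def gaussMap (x : ℝ) : ℝ := Int.fract (1 / x)

/-- The `n`-th continued fraction partial quotient of `x`:
`a_n(x) = ⌊1 / T^{n-1}(x)⌋` for `n ≥ 1`. -/
noncomputable def cfa (n : ℕ) (x : ℝ) : ℤ := ⌊1 / (gaussMap^[n - 1] x)⌋

/-- The set of irrational `x ∈ [0,1)` whose odd-order partial quotients all equal 1. -/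
def Ieven : Set ℝ :=
  {x | x ∈ Set.Ico (0 : ℝ) 1 ∧ Irrational x ∧ ∀ k : ℕ, cfa (2 * k + 1) x = 1}

/-- Given `[a_2, a_4, …, a_{2n}]`, the denominator `q_{2n}` of
`[0; 1, a_2, 1, a_4, …, 1, a_{2n}]` (with `q_0 = q_1 = 1`,
`q_{2j} = a_{2j} q_{2j-1} + q_{2j-2}`, `q_{2j+1} = q_{2j} + q_{2j-1}`). -/
def qEven (l : List ℕ) : ℕ :=
  (l.foldl (fun p a => (p.2 + p.1, a * (p.2 + p.1) + p.2)) ((0 : ℕ), (1 : ℕ))).2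

/-- `f_{n,B}(ρ) = Σ_{a_2,…,a_{2n} ∈ 𝒜} (B^{2n} q_{2n}²)^{−ρ}`. -/
noncomputable def fnB (A : Set ℕ) (B : ℝ) (n : ℕ) (ρ : ℝ) : ENNReal :=
  ∑' v : Fin n → A,
    ENNReal.ofReal ((B ^ (2 * n) * (qEven (List.ofFn fun i => (v i : ℕ)) : ℝ) ^ 2) ^ (-ρ))

/-- `s_{n,B}(𝒜) = inf {ρ ≥ 0 : f_{n,B}(ρ) ≤ 1}`. -/
noncomputable def snB (A : Set ℕ) (B : ℝ) (n : ℕ) : ℝ :=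
  sInf {ρ : ℝ | 0 ≤ ρ ∧ fnB A B n ρ ≤ 1}

/-- `q_n(x)`: denominator of the `n`-th convergent of `x`. -/
noncomputable def qden (x : ℝ) : ℕ → ℤ
  | 0 => 1
  | 1 => cfa 1 x
  | (n + 2) => cfa (n + 2) x * qden x (n + 1) + qden x n

/-- `p_n(x)`: numerator of the `n`-th convergent of `x ∈ [0,1)`. -/
noncomputable def pnum (x : ℝ) : ℕ → ℤ
  | 0 => 0
  | 1 => 1
  | (n + 2) => cfa (n + 2) x * pnum x (n + 1) + pnum x n

/-!
If `x ∈ I_even` has `a_{2k+2}(x) ≥ B^{2k+2}`, then `x` lies within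
`T^{2k+1}(x) / q_{2k+1}² ≤ 1 / (B^{2k+2} q_{2k}²)` of the convergent `p_{2k+1}/q_{2k+1}`, which
depends only on `a_2, …, a_{2k}`. Hence for every `N`, `F(B)` is covered by sets indexed by
`k ≥ N` and `(a_2, …, a_{2k})`, of diameter at most `2 / (B^{2k+2} q_{2k}²)`. For
`s_B < ρ' < ρ` we have `f_{k,B}(ρ') ≤ 1` for large `k` (the defining set of `s_{k,B}` is never
empty, since `q_{2k} ≥ ∏ (a_{2j} + 1)` gives `f_{k,B}(1) ≤ (∑_{a ≥ 1} (a + 1)⁻²)^k ≤ 1`), so the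
`ρ`-th powers of the diameters at level `k` sum to at most `2^ρ B^{-2(k+1)(ρ-ρ')}`. These bounds
form a convergent geometric series, whose tails tend to `0`, so `μH[ρ] F(B) = 0` for all `ρ > s_B`.
-/

open scoped ENNReal

section GaussMap

variable {x : ℝ}

lemma irrational_gaussMap (hirr : Irrational x) : Irrational (gaussMap x) := by
  rw [gaussMap, Int.fract, one_div]
  exact hirr.inv.sub_intCast _

lemma irrational_iterate_gaussMap (hirr : Irrational x) (n : ℕ) :
    Irrational (gaussMap^[n] x) := by
  induction n with
  | zero => exact hirr
  | succ n ih => exact Function.iterate_succ_apply' gaussMap n x ▸ irrational_gaussMap ih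

lemma gaussMap_mem_Ioo (hirr : Irrational x) : gaussMap x ∈ Set.Ioo (0 : ℝ) 1 :=
  ⟨(Int.fract_nonneg _).lt_of_ne' (irrational_gaussMap hirr).ne_zero, Int.fract_lt_one _⟩

lemma iterate_gaussMap_mem_Ioo (hx : x ∈ Set.Ioo (0 : ℝ) 1) (hirr : Irrational x) :
    ∀ n, gaussMap^[n] x ∈ Set.Ioo (0 : ℝ) 1
  | 0 => hx
  | n + 1 => Function.iterate_succ_apply' gaussMap n x ▸
      gaussMap_mem_Ioo (irrational_iterate_gaussMap hirr n)

lemma cfa_succ (n : ℕ) (x : ℝ) : cfa (n + 1) x = ⌊1 / gaussMap^[n] x⌋ := rfl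

lemma cfa_succ_add_iterate_gaussMap (n : ℕ) (x : ℝ) :
    (cfa (n + 1) x : ℝ) + gaussMap^[n + 1] x = 1 / gaussMap^[n] x := by
  rw [Function.iterate_succ_apply', cfa_succ, gaussMap]
  exact Int.floor_add_fract _

variable (hx : x ∈ Set.Ioo (0 : ℝ) 1) (hirr : Irrational x)
include hx hirr

lemma one_le_cfa_succ (n : ℕ) : 1 ≤ cfa (n + 1) x := by
  obtain ⟨h0, h1⟩ := iterate_gaussMap_mem_Ioo hx hirr n
  rw [cfa_succ, Int.le_floor, Int.cast_one, le_div_iff₀ h0]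
  linarith

lemma iterate_gaussMap_le_inv_cfa (n : ℕ) : gaussMap^[n] x ≤ 1 / (cfa (n + 1) x : ℝ) := by
  have ht := (iterate_gaussMap_mem_Ioo hx hirr n).1
  have ha : (0 : ℝ) < cfa (n + 1) x := by exact_mod_cast one_le_cfa_succ hx hirr n
  rw [le_div_iff₀ ha, ← le_div_iff₀' ht, cfa_succ]
  exact Int.floor_le _

end GaussMap

section Convergents

lemma pnum_succ_mul_qden_sub (x : ℝ) :
    ∀ n, pnum x (n + 1) * qden x n - pnum x n * qden x (n + 1) = (-1) ^ n
  | 0 => by simp [pnum, qden]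
  | n + 1 => by
    rw [pnum, qden, pow_succ, ← pnum_succ_mul_qden_sub x n]
    ring

lemma qden_congr {x y : ℝ} :
    ∀ n, (∀ i < n, cfa (i + 1) x = cfa (i + 1) y) → qden x n = qden y n
  | 0, _ => rfl
  | 1, h => h 0 one_pos
  | n + 2, h => by
    rw [qden, qden, h (n + 1) (by omega), qden_congr (n + 1) fun i hi => h i (by omega),
      qden_congr n fun i hi => h i (by omega)]

lemma pnum_congr {x y : ℝ} :
    ∀ n, (∀ i < n, cfa (i + 1) x = cfa (i + 1) y) → pnum x n = pnum y n
  | 0, _ => rfl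
  | 1, _ => rfl
  | n + 2, h => by
    rw [pnum, pnum, h (n + 1) (by omega), pnum_congr (n + 1) fun i hi => h i (by omega),
      pnum_congr n fun i hi => h i (by omega)]

variable {x : ℝ} (hx : x ∈ Set.Ioo (0 : ℝ) 1) (hirr : Irrational x)
include hx hirr

lemma one_le_qden : ∀ n, 1 ≤ qden x n
  | 0 => le_rfl
  | 1 => one_le_cfa_succ hx hirr 0
  | n + 2 => by
    have := one_le_cfa_succ hx hirr (n + 1)
    have := one_le_qden (n + 1)
    have := one_le_qden n
    rw [qden]
    nlinarith

lemma qden_succ_mul_sub_pnum_succ (n : ℕ) :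
    (qden x (n + 1) : ℝ) * x - pnum x (n + 1) =
      -gaussMap^[n + 1] x * ((qden x n : ℝ) * x - pnum x n) := by
  induction n with
  | zero =>
    have h := cfa_succ_add_iterate_gaussMap 0 x
    have hx0 : x ≠ 0 := hx.1.ne'
    simp only [Function.iterate_zero_apply] at h
    simp only [qden, pnum, zero_add]
    rw [eq_sub_of_add_eq h]
    field_simp
    push_cast
    ring
  | succ n ih =>
    have h : (cfa (n + 2) x : ℝ) + gaussMap^[n + 1 + 1] x = 1 / gaussMap^[n + 1] x :=
      cfa_succ_add_iterate_gaussMap (n + 1) x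
    have ht : gaussMap^[n + 1] x ≠ 0 := (iterate_gaussMap_mem_Ioo hx hirr (n + 1)).1.ne'
    have key : (cfa (n + 2) x : ℝ) * gaussMap^[n + 1] x =
        1 - gaussMap^[n + 1 + 1] x * gaussMap^[n + 1] x := by
      rw [eq_sub_of_add_eq h]
      field_simp
    rw [qden, pnum]
    push_cast
    linear_combination ((cfa (n + 2) x : ℝ) + gaussMap^[n + 1 + 1] x) * ih -
      ((qden x n : ℝ) * x - pnum x n) * key

lemma abs_qden_mul_sub_pnum_mul_eq_one (n : ℕ) :
    |(qden x n : ℝ) * x - pnum x n| * (qden x (n + 1) + qden x n * gaussMap^[n + 1] x) = 1 := by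
  have ht := (iterate_gaussMap_mem_Ioo hx hirr (n + 1)).1
  have hq₀ : (1 : ℝ) ≤ qden x n := by exact_mod_cast one_le_qden hx hirr n
  have hq₁ : (1 : ℝ) ≤ qden x (n + 1) := by exact_mod_cast one_le_qden hx hirr (n + 1)
  have hdet : (pnum x (n + 1) : ℝ) * qden x n - pnum x n * qden x (n + 1) = (-1) ^ n := by
    exact_mod_cast pnum_succ_mul_qden_sub x n
  have hrec := qden_succ_mul_sub_pnum_succ hx hirr n
  rw [← abs_of_pos (by positivity : (0 : ℝ) < qden x (n + 1) + qden x n * gaussMap^[n + 1] x),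
    ← abs_mul, show ((qden x n : ℝ) * x - pnum x n) *
      (qden x (n + 1) + qden x n * gaussMap^[n + 1] x) = (-1) ^ n by
        linear_combination (qden x n : ℝ) * hrec + hdet]
  simp

lemma abs_sub_pnum_div_qden_le (n : ℕ) :
    |x - pnum x (n + 1) / qden x (n + 1)| ≤ 1 / ((cfa (n + 2) x : ℝ) * (qden x (n + 1)) ^ 2) := by
  set t := gaussMap^[n + 1] x
  set D := (qden x n : ℝ) * x - pnum x n
  have ht : 0 < t := (iterate_gaussMap_mem_Ioo hx hirr (n + 1)).1
  have hq₀ : (1 : ℝ) ≤ qden x n := by exact_mod_cast one_le_qden hx hirr n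
  have hq₁ : (0 : ℝ) < qden x (n + 1) := by exact_mod_cast one_le_qden hx hirr (n + 1)
  have hD : |D| ≤ 1 / qden x (n + 1) := by
    rw [le_div_iff₀ hq₁]
    have : 0 ≤ |D| * (qden x n * t) := by positivity
    linarith [abs_qden_mul_sub_pnum_mul_eq_one hx hirr n]
  have hsub : x - pnum x (n + 1) / qden x (n + 1) = -t * D / qden x (n + 1) := by
    rw [← qden_succ_mul_sub_pnum_succ hx hirr n]
    field_simp
  calc |x - pnum x (n + 1) / qden x (n + 1)| = t * |D| / qden x (n + 1) := by
        rw [hsub, abs_div, abs_mul, abs_neg, abs_of_pos ht, abs_of_pos hq₁]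
    _ ≤ 1 / (cfa (n + 2) x : ℝ) * (1 / qden x (n + 1)) / qden x (n + 1) := by
        have hta : t ≤ 1 / (cfa (n + 2) x : ℝ) := iterate_gaussMap_le_inv_cfa hx hirr (n + 1)
        gcongr
        exact ht.le.trans hta
    _ = 1 / ((cfa (n + 2) x : ℝ) * (qden x (n + 1)) ^ 2) := by field_simp

end Convergents

section EvenDenominators

/-- `(q_{2j-1}, q_{2j}) ↦ (q_{2j+1}, q_{2j+2})` for `[0; 1, a_2, 1, a_4, …]`, with `q_{-1} = 0`. -/
def qEvenStep (s : ℕ × ℕ) (a : ℕ) : ℕ × ℕ := (s.2 + s.1, a * (s.2 + s.1) + s.2)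

lemma qEven_eq_foldl (l : List ℕ) : qEven l = (l.foldl qEvenStep (0, 1)).2 := rfl

lemma mul_prod_succ_le_foldl_qEvenStep :
    ∀ (l : List ℕ) (s : ℕ × ℕ), s.2 * (l.map (· + 1)).prod ≤ (l.foldl qEvenStep s).2
  | [], s => by simp
  | a :: l, s => by
    calc s.2 * ((a :: l).map (· + 1)).prod = (a + 1) * s.2 * (l.map (· + 1)).prod := by
          simp only [List.map_cons, List.prod_cons]
          ring
      _ ≤ (qEvenStep s a).2 * (l.map (· + 1)).prod := by
          gcongr
          simp only [qEvenStep]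
          nlinarith
      _ ≤ ((a :: l).foldl qEvenStep s).2 := mul_prod_succ_le_foldl_qEvenStep l _

lemma prod_succ_le_qEven (l : List ℕ) : (l.map (· + 1)).prod ≤ qEven l := by
  rw [qEven_eq_foldl]
  simpa using mul_prod_succ_le_foldl_qEvenStep l (0, 1)

lemma one_le_qEven (l : List ℕ) : 1 ≤ qEven l :=
  (List.prod_pos fun _ ha => by
    obtain ⟨b, -, rfl⟩ := List.mem_map.1 ha
    exact Nat.succ_pos b).trans_le (prod_succ_le_qEven l)

lemma foldl_qEvenStep_ofFn_cfa {x : ℝ} (hodd : ∀ j : ℕ, cfa (2 * j + 1) x = 1) :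
    ∀ {k : ℕ} {v : Fin k → ℕ}, (∀ j : Fin k, cfa (2 * j + 2) x = v j) →
      (((List.ofFn v).foldl qEvenStep (0, 1)).2 : ℤ) = qden x (2 * k) ∧
      (((List.ofFn v).foldl qEvenStep (0, 1)).1 + ((List.ofFn v).foldl qEvenStep (0, 1)).2 : ℤ) =
        qden x (2 * k + 1)
  | 0, v, _ => by simp [qden, hodd 0]
  | k + 1, v, hv => by
    obtain ⟨ih₂, ih₁⟩ := foldl_qEvenStep_ofFn_cfa hodd (v := fun j => v j.castSucc)
      fun j => hv j.castSucc
    have h₂ : cfa (2 * k + 2) x = v (Fin.last k) := hv (Fin.last k)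
    have h₃ : cfa (2 * k + 3) x = 1 := hodd (k + 1)
    rw [List.ofFn_succ', List.concat_eq_append, List.foldl_append, List.foldl_cons,
      List.foldl_nil]
    have hq₂ : qden x (2 * (k + 1)) = cfa (2 * k + 2) x * qden x (2 * k + 1) + qden x (2 * k) :=
      rfl
    have hq₃ : qden x (2 * (k + 1) + 1) = cfa (2 * k + 3) x * qden x (2 * (k + 1)) +
        qden x (2 * k + 1) := rfl
    simp only [qEvenStep]
    push_cast
    rw [hq₃, hq₂, h₂, h₃, ← ih₁, ← ih₂]
    constructor <;> ring

lemma qEven_ofFn_le_qden {x : ℝ} (hodd : ∀ j : ℕ, cfa (2 * j + 1) x = 1) {k : ℕ}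
    {v : Fin k → ℕ} (hv : ∀ j : Fin k, cfa (2 * j + 2) x = v j) :
    (qEven (List.ofFn v) : ℤ) ≤ qden x (2 * k + 1) := by
  rw [qEven_eq_foldl, ← (foldl_qEvenStep_ofFn_cfa hodd hv).2]
  omega

end EvenDenominators

section Pressure

lemma one_le_pow_mul_qEven_sq {B : ℝ} (hB : 1 ≤ B) (n : ℕ) (l : List ℕ) :
    1 ≤ B ^ (2 * n) * (qEven l : ℝ) ^ 2 :=
  one_le_mul_of_one_le_of_one_le (one_le_pow₀ hB) (one_le_pow₀ (by exact_mod_cast one_le_qEven l))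

lemma fnB_antitone (A : Set ℕ) {B : ℝ} (hB : 1 ≤ B) (n : ℕ) : Antitone (fnB A B n) :=
  fun _ _ hρ => ENNReal.tsum_le_tsum fun _ => ENNReal.ofReal_le_ofReal <|
    Real.rpow_le_rpow_of_exponent_le (one_le_pow_mul_qEven_sq hB n _) (neg_le_neg hρ)

lemma tsum_fin_pi_prod {α : Type*} (g : α → ℝ≥0∞) :
    ∀ n : ℕ, ∑' v : Fin n → α, ∏ i, g (v i) = (∑' a, g a) ^ n
  | 0 => by simp
  | n + 1 => by
    rw [← (Fin.consEquiv fun _ : Fin (n + 1) => α).tsum_eq, ENNReal.tsum_prod', pow_succ',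
      ← ENNReal.tsum_mul_right]
    simp only [Fin.consEquiv_apply, Fin.prod_univ_succ, Fin.cons_zero, Fin.cons_succ]
    simp_rw [ENNReal.tsum_mul_left, tsum_fin_pi_prod g n]

lemma tsum_inv_succ_sq_le_one :
    ∑' a : {m : ℕ | 1 ≤ m}, ENNReal.ofReal ((((a : ℕ) : ℝ) + 1) ^ 2)⁻¹ ≤ 1 := by
  refine ENNReal.summable.tsum_le_of_sum_le fun s => ?_
  let succ : {m : ℕ | 1 ≤ m} ↪ ℕ := ⟨fun a => a + 1, fun a b h => Subtype.ext (by simpa using h)⟩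
  obtain ⟨N, hN⟩ := (s.map succ).exists_nat_subset_range
  have hsub : s.map succ ⊆ Finset.Ioo 1 N := fun i hi => by
    have hiN := Finset.mem_range.1 (hN hi)
    obtain ⟨a, -, rfl⟩ := Finset.mem_map.1 hi
    exact Finset.mem_Ioo.2 ⟨Nat.lt_add_of_pos_left a.2, hiN⟩
  calc ∑ a ∈ s, ENNReal.ofReal ((((a : ℕ) : ℝ) + 1) ^ 2)⁻¹
      = ∑ i ∈ s.map succ, ENNReal.ofReal (((i : ℝ)) ^ 2)⁻¹ := by
        rw [Finset.sum_map]
        refine Finset.sum_congr rfl fun a _ => ?_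
        change _ = ENNReal.ofReal (((((a : ℕ) + 1 : ℕ) : ℝ)) ^ 2)⁻¹
        push_cast
        rfl
    _ ≤ ∑ i ∈ Finset.Ioo 1 N, ENNReal.ofReal (((i : ℝ)) ^ 2)⁻¹ :=
        Finset.sum_le_sum_of_subset hsub
    _ = ENNReal.ofReal (∑ i ∈ Finset.Ioo 1 N, ((i : ℝ) ^ 2)⁻¹) :=
        (ENNReal.ofReal_sum_of_nonneg fun _ _ => by positivity).symm
    _ ≤ ENNReal.ofReal (2 / (1 + 1)) := ENNReal.ofReal_le_ofReal (by
        exact_mod_cast sum_Ioo_inv_sq_le 1 N)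
    _ = 1 := by norm_num

lemma fnB_one_le_one {B : ℝ} (hB : 1 ≤ B) (n : ℕ) : fnB {m : ℕ | 1 ≤ m} B n 1 ≤ 1 := by
  have hterm (v : Fin n → {m : ℕ | 1 ≤ m}) :
      ENNReal.ofReal ((B ^ (2 * n) * (qEven (List.ofFn fun i => (v i : ℕ)) : ℝ) ^ 2) ^ (-1 : ℝ)) ≤
        ∏ i, ENNReal.ofReal (((((v i : ℕ)) : ℝ) + 1) ^ 2)⁻¹ := by
    have hprod : ∏ i, (((v i : ℕ) : ℝ) + 1) ≤ qEven (List.ofFn fun i => (v i : ℕ)) := by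
      have := prod_succ_le_qEven (List.ofFn fun i => (v i : ℕ))
      rw [List.map_ofFn, List.prod_ofFn] at this
      exact_mod_cast this
    rw [← ENNReal.ofReal_prod_of_nonneg fun _ _ => by positivity, Finset.prod_inv_distrib,
      Finset.prod_pow, Real.rpow_neg_one]
    refine ENNReal.ofReal_le_ofReal (inv_anti₀ (by positivity) ?_)
    calc (∏ i, (((v i : ℕ) : ℝ) + 1)) ^ 2 ≤ (qEven (List.ofFn fun i => (v i : ℕ)) : ℝ) ^ 2 := by
          gcongr
      _ ≤ B ^ (2 * n) * (qEven (List.ofFn fun i => (v i : ℕ)) : ℝ) ^ 2 :=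
          le_mul_of_one_le_left (by positivity) (one_le_pow₀ hB)
  calc fnB {m : ℕ | 1 ≤ m} B n 1
      ≤ ∑' v : Fin n → {m : ℕ | 1 ≤ m}, ∏ i, ENNReal.ofReal (((((v i : ℕ)) : ℝ) + 1) ^ 2)⁻¹ :=
        ENNReal.tsum_le_tsum hterm
    _ = (∑' a : {m : ℕ | 1 ≤ m}, ENNReal.ofReal ((((a : ℕ) : ℝ) + 1) ^ 2)⁻¹) ^ n :=
        tsum_fin_pi_prod (fun a : {m : ℕ | 1 ≤ m} => ENNReal.ofReal ((((a : ℕ) : ℝ) + 1) ^ 2)⁻¹) n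
    _ ≤ 1 := pow_le_one' tsum_inv_succ_sq_le_one n

lemma snB_nonneg (A : Set ℕ) (B : ℝ) (n : ℕ) : 0 ≤ snB A B n :=
  Real.sInf_nonneg fun _ hρ => hρ.1

lemma fnB_le_one_of_snB_lt {B : ℝ} (hB : 1 ≤ B) {n : ℕ} {ρ : ℝ}
    (h : snB {m : ℕ | 1 ≤ m} B n < ρ) : fnB {m : ℕ | 1 ≤ m} B n ρ ≤ 1 := by
  have hone : (1 : ℝ) ∈ {ρ : ℝ | 0 ≤ ρ ∧ fnB {m : ℕ | 1 ≤ m} B n ρ ≤ 1} :=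
    ⟨zero_le_one, fnB_one_le_one hB n⟩
  obtain ⟨ρ', hρ', hρ'ρ⟩ := exists_lt_of_csInf_lt ⟨1, hone⟩ h
  exact (fnB_antitone _ hB n hρ'ρ.le).trans hρ'.2

end Pressure

section Covering

def FB (B : ℝ) : Set ℝ :=
  {x | x ∈ Ieven ∧ ∃ᶠ n in atTop, (B ^ (2 * n) : ℝ) ≤ (cfa (2 * n) x : ℝ)}

def evenCylinder (B : ℝ) (k : ℕ) (v : Fin k → {m : ℕ | 1 ≤ m}) : Set ℝ :=
  {x | x ∈ Ieven ∧ (∀ j : Fin k, cfa (2 * j + 2) x = (v j : ℕ)) ∧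
    B ^ (2 * (k + 1)) ≤ (cfa (2 * (k + 1)) x : ℝ)}

lemma mem_Ioo_of_mem_Ieven {x : ℝ} (hx : x ∈ Ieven) : x ∈ Set.Ioo (0 : ℝ) 1 :=
  ⟨hx.1.1.lt_of_ne' hx.2.1.ne_zero, hx.1.2⟩

variable {B : ℝ} {k : ℕ} {v : Fin k → {m : ℕ | 1 ≤ m}}

lemma abs_sub_convergent_le_of_mem_evenCylinder (hB : 0 < B) {x : ℝ}
    (hx : x ∈ evenCylinder B k v) :
    |x - pnum x (2 * k + 1) / qden x (2 * k + 1)| ≤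
      1 / (B ^ (2 * (k + 1)) * (qEven (List.ofFn fun j => (v j : ℕ)) : ℝ) ^ 2) := by
  obtain ⟨hIeven, hv, hlarge⟩ := hx
  have hIoo := mem_Ioo_of_mem_Ieven hIeven
  have hq : (qEven (List.ofFn fun j => (v j : ℕ)) : ℝ) ≤ qden x (2 * k + 1) := by
    exact_mod_cast qEven_ofFn_le_qden hIeven.2.2 hv
  have hq₁ : (1 : ℝ) ≤ qEven (List.ofFn fun j => (v j : ℕ)) := by exact_mod_cast one_le_qEven _
  calc |x - pnum x (2 * k + 1) / qden x (2 * k + 1)|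
      ≤ 1 / ((cfa (2 * k + 2) x : ℝ) * (qden x (2 * k + 1)) ^ 2) :=
        abs_sub_pnum_div_qden_le hIoo hIeven.2.1 (2 * k)
    _ ≤ _ := by
        have ha := one_le_cfa_succ hIoo hIeven.2.1 (2 * k + 1)
        gcongr
        exact hlarge

lemma ediam_evenCylinder_le (hB : 0 < B) :
    Metric.ediam (evenCylinder B k v) ≤
      ENNReal.ofReal
        (2 / (B ^ (2 * (k + 1)) * (qEven (List.ofFn fun j => (v j : ℕ)) : ℝ) ^ 2)) := by
  refine Metric.ediam_le_of_forall_dist_le fun x hx y hy => ?_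
  have hagree : ∀ i < 2 * k + 1, cfa (i + 1) x = cfa (i + 1) y := by
    intro i hi
    obtain ⟨j, rfl | rfl⟩ := Nat.even_or_odd' i
    · rw [hx.1.2.2 j, hy.1.2.2 j]
    · rw [hx.2.1 ⟨j, by omega⟩, hy.2.1 ⟨j, by omega⟩]
  have hx' := abs_sub_convergent_le_of_mem_evenCylinder hB hx
  have hy' := abs_sub_convergent_le_of_mem_evenCylinder hB hy
  rw [pnum_congr _ hagree, qden_congr _ hagree] at hx'
  rw [Real.dist_eq]
  calc |x - y| ≤ |x - pnum y (2 * k + 1) / qden y (2 * k + 1)| +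
        |pnum y (2 * k + 1) / qden y (2 * k + 1) - y| := abs_sub_le _ _ _
    _ ≤ _ := by
        rw [abs_sub_comm _ y, show (2 : ℝ) = 1 + 1 by norm_num, add_div]
        exact add_le_add hx' hy'

def evenCylinderCover (B : ℝ) (N : ℕ) (i : Σ k, Fin k → {m : ℕ | 1 ≤ m}) : Set ℝ :=
  ⋃ (_ : N ≤ i.1), evenCylinder B i.1 i.2

lemma evenCylinderCover_of_le {N : ℕ} (h : N ≤ k) (v : Fin k → {m : ℕ | 1 ≤ m}) :
    evenCylinderCover B N ⟨k, v⟩ = evenCylinder B k v := by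
  simp [evenCylinderCover, h]

lemma evenCylinderCover_of_lt {N : ℕ} (h : k < N) (v : Fin k → {m : ℕ | 1 ≤ m}) :
    evenCylinderCover B N ⟨k, v⟩ = ∅ := by
  simp [evenCylinderCover, h]

lemma FB_subset_iUnion_evenCylinderCover (N : ℕ) : FB B ⊆ ⋃ i, evenCylinderCover B N i := by
  rintro x ⟨hIeven, hfreq⟩
  obtain ⟨_ | k, hNk, hlarge⟩ := frequently_atTop.1 hfreq (N + 1)
  · omega
  have hv (j : Fin k) : 1 ≤ cfa (2 * j + 2) x :=
    one_le_cfa_succ (mem_Ioo_of_mem_Ieven hIeven) hIeven.2.1 (2 * j + 1)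
  refine Set.mem_iUnion₂.2 ⟨⟨k, fun j => ⟨(cfa (2 * j + 2) x).toNat, by
    show 1 ≤ _; have := hv j; omega⟩⟩, Nat.le_of_succ_le_succ hNk, hIeven, fun j => ?_, hlarge⟩
  have := hv j
  simp only
  omega

end Covering

section HausdorffMeasure

lemma rpow_neg_le_mul_rpow_neg {Y W Z ρ' ρ : ℝ} (hY : 0 < Y) (hW : 0 < W) (hYZ : Y ≤ Z)
    (hWZ : W ≤ Z) (hρ' : 0 ≤ ρ') (hρ : ρ' ≤ ρ) : Z ^ (-ρ) ≤ Y ^ (-(ρ - ρ')) * W ^ (-ρ') := by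
  rw [show -ρ = -(ρ - ρ') + -ρ' by ring, Real.rpow_add (hY.trans_le hYZ)]
  exact mul_le_mul (Real.rpow_le_rpow_of_nonpos hY hYZ (by linarith))
    (Real.rpow_le_rpow_of_nonpos hW hWZ (by linarith)) (Real.rpow_nonneg (hW.le.trans hWZ) _)
    (Real.rpow_nonneg hY.le _)

variable {B ρ' ρ : ℝ} {k : ℕ}

lemma ediam_evenCylinder_rpow_le (hB : 1 < B) (hρ' : 0 ≤ ρ') (hρ : ρ' ≤ ρ)
    (v : Fin k → {m : ℕ | 1 ≤ m}) :
    Metric.ediam (evenCylinder B k v) ^ ρ ≤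
      ENNReal.ofReal (2 ^ ρ * ((B ^ 2) ^ (-(ρ - ρ'))) ^ (k + 1)) *
        ENNReal.ofReal
          ((B ^ (2 * k) * (qEven (List.ofFn fun j => (v j : ℕ)) : ℝ) ^ 2) ^ (-ρ')) := by
  set q : ℝ := (qEven (List.ofFn fun j => (v j : ℕ)) : ℝ)
  have hq : 1 ≤ q := Nat.one_le_cast.2 (one_le_qEven _)
  have hZ : 0 < B ^ (2 * (k + 1)) * q ^ 2 := by positivity
  have hgeom : ((B ^ 2) ^ (-(ρ - ρ'))) ^ (k + 1) = (B ^ (2 * (k + 1))) ^ (-(ρ - ρ')) := by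
    rw [Real.rpow_pow_comm (by positivity), pow_mul]
  calc Metric.ediam (evenCylinder B k v) ^ ρ
      ≤ ENNReal.ofReal (2 / (B ^ (2 * (k + 1)) * q ^ 2)) ^ ρ :=
        ENNReal.rpow_le_rpow (ediam_evenCylinder_le (by positivity)) (hρ'.trans hρ)
    _ = ENNReal.ofReal (2 ^ ρ * (B ^ (2 * (k + 1)) * q ^ 2) ^ (-ρ)) := by
        rw [ENNReal.ofReal_rpow_of_nonneg (by positivity) (hρ'.trans hρ), div_eq_mul_inv,
          Real.mul_rpow zero_le_two (by positivity), Real.inv_rpow hZ.le, Real.rpow_neg hZ.le]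
    _ ≤ ENNReal.ofReal (2 ^ ρ * (((B ^ 2) ^ (-(ρ - ρ'))) ^ (k + 1) *
          (B ^ (2 * k) * q ^ 2) ^ (-ρ'))) := by
        rw [hgeom]
        gcongr
        refine rpow_neg_le_mul_rpow_neg (by positivity) (by positivity) ?_ ?_ hρ' hρ
        · exact le_mul_of_one_le_right (by positivity) (one_le_pow₀ hq)
        · gcongr
          · exact hB.le
          · omega
    _ = _ := by rw [← mul_assoc, ENNReal.ofReal_mul (by positivity)]

lemma tsum_ediam_evenCylinder_rpow_le (hB : 1 < B) (hρ' : 0 ≤ ρ') (hρ : ρ' ≤ ρ) (k : ℕ) :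
    ∑' v, Metric.ediam (evenCylinder B k v) ^ ρ ≤
      ENNReal.ofReal (2 ^ ρ * ((B ^ 2) ^ (-(ρ - ρ'))) ^ (k + 1)) *
        fnB {m : ℕ | 1 ≤ m} B k ρ' := by
  rw [fnB, ← ENNReal.tsum_mul_left]
  exact ENNReal.tsum_le_tsum (ediam_evenCylinder_rpow_le hB hρ' hρ)

lemma ediam_evenCylinderCover_le (hB : 1 < B) (N : ℕ) (i : Σ k, Fin k → {m : ℕ | 1 ≤ m}) :
    Metric.ediam (evenCylinderCover B N i) ≤ ENNReal.ofReal (2 / B ^ (2 * (N + 1))) := by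
  obtain ⟨k, v⟩ := i
  rcases le_or_gt N k with hN | hN
  · rw [evenCylinderCover_of_le hN]
    refine (ediam_evenCylinder_le (by positivity)).trans (ENNReal.ofReal_le_ofReal ?_)
    gcongr
    exact (pow_le_pow_right₀ hB.le (by omega)).trans
      (le_mul_of_one_le_right (by positivity) (one_le_pow₀ (Nat.one_le_cast.2 (one_le_qEven _))))
  · simp [evenCylinderCover_of_lt hN]

lemma tsum_ediam_evenCylinderCover_rpow_le (hB : 1 < B) (hρ' : 0 ≤ ρ') (hρ : ρ' < ρ) {N : ℕ}
    (hfnB : ∀ k ≥ N, fnB {m : ℕ | 1 ≤ m} B k ρ' ≤ 1) :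
    ∑' i, Metric.ediam (evenCylinderCover B N i) ^ ρ ≤
      ∑' k, ENNReal.ofReal (2 ^ ρ * ((B ^ 2) ^ (-(ρ - ρ'))) ^ (k + N + 1)) := by
  rw [ENNReal.tsum_sigma', ← ENNReal.summable.sum_add_tsum_nat_add' (k := N),
    Finset.sum_eq_zero fun k hk => by
      simp [evenCylinderCover_of_lt (Finset.mem_range.1 hk),
        ENNReal.zero_rpow_of_pos (hρ'.trans_lt hρ)],
    zero_add]
  refine ENNReal.tsum_le_tsum fun k => ?_
  simp only [evenCylinderCover_of_le (Nat.le_add_left N k)]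
  exact (tsum_ediam_evenCylinder_rpow_le hB hρ' hρ.le _).trans
    (mul_le_of_le_one_right' (hfnB _ (Nat.le_add_left N k)))

lemma hausdorffMeasure_FB_eq_zero (hB : 1 < B) (hρ' : 0 ≤ ρ') (hρ : ρ' < ρ)
    (hfnB : ∀ᶠ k in atTop, fnB {m : ℕ | 1 ≤ m} B k ρ' ≤ 1) : μH[ρ] (FB B) = 0 := by
  set c : ℝ := (B ^ 2) ^ (-(ρ - ρ'))
  have hc₀ : 0 ≤ c := by positivity
  have hc₁ : c < 1 := Real.rpow_lt_one_of_one_lt_of_neg (one_lt_pow₀ hB two_ne_zero) (by linarith)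
  have hgeom : ∑' k, ENNReal.ofReal (2 ^ ρ * c ^ (k + 1)) ≠ ∞ := by
    rw [← ENNReal.ofReal_tsum_of_nonneg (fun k => by positivity)
      (((summable_nat_add_iff 1).2 (summable_geometric_of_lt_one hc₀ hc₁)).mul_left _)]
    exact ENNReal.ofReal_ne_top
  have hr : Tendsto (fun N : ℕ => ENNReal.ofReal (2 / B ^ (2 * (N + 1)))) atTop (𝓝 0) := by
    rw [← ENNReal.ofReal_zero]
    refine ENNReal.tendsto_ofReal (tendsto_const_nhds.div_atTop ?_)
    exact (tendsto_pow_atTop_atTop_of_one_lt hB).comp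
      (tendsto_atTop_mono (fun N => show N ≤ 2 * (N + 1) by omega) tendsto_id)
  obtain ⟨K, hK⟩ := eventually_atTop.1 hfnB
  refine le_antisymm ?_ bot_le
  calc μH[ρ] (FB B)
      ≤ liminf (fun N => ∑' i, Metric.ediam (evenCylinderCover B N i) ^ ρ) atTop :=
        Measure.hausdorffMeasure_le_liminf_tsum ρ _ _ hr (evenCylinderCover B)
          (Eventually.of_forall (ediam_evenCylinderCover_le hB))
          (Eventually.of_forall FB_subset_iUnion_evenCylinderCover)
    _ ≤ liminf (fun N => ∑' k, ENNReal.ofReal (2 ^ ρ * c ^ (k + N + 1))) atTop :=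
        liminf_le_liminf (eventually_atTop.2 ⟨K, fun N hN =>
          tsum_ediam_evenCylinderCover_rpow_le hB hρ' hρ fun k hk => hK k (hN.trans hk)⟩)
    _ = 0 := (ENNReal.tendsto_sum_nat_add _ hgeom).liminf_eq

end HausdorffMeasure

/-- Proposition 5.1: for `B > 1`, `dim_H F(B) ≤ s_B`. -/
theorem dimH_FB_le_sB (B : ℝ) (hB : 1 < B) (sB : ℝ)
    (hsB : Tendsto (fun n => snB {m : ℕ | 1 ≤ m} B n) atTop (nhds sB)) :
    dimH {x | x ∈ Ieven ∧ ∃ᶠ n in atTop, (B ^ (2 * n) : ℝ) ≤ (cfa (2 * n) x : ℝ)} ≤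
      ENNReal.ofReal sB := by
  have hsB₀ : 0 ≤ sB := ge_of_tendsto' hsB fun n => snB_nonneg _ _ n
  refine dimH_le fun ρ hρ => le_of_not_gt fun hlt => ?_
  rw [ENNReal.ofReal_lt_coe_iff hsB₀] at hlt
  have hfnB : ∀ᶠ k in atTop, fnB {m : ℕ | 1 ≤ m} B k ((sB + ρ) / 2) ≤ 1 :=
    (hsB.eventually (gt_mem_nhds (by linarith))).mono fun k hk => fnB_le_one_of_snB_lt hB.le hk
  have hzero : μH[ρ] (FB B) = 0 :=
    hausdorffMeasure_FB_eq_zero hB (by linarith) (by linarith) hfnB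
  exact ENNReal.zero_ne_top (hzero ▸ hρ)
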